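/- Let C = ((i_1, j_1), …, (i_M, j_M)) be a comparator network on K wires (each i_m ≠ j_m are indices in {1, …, K}). Let y⁰, y¹, …, y^M be vectors in {0, 1, ⊥}^K such that for each step m, y^m agrees with y^{m−1} on all wires other than i_m and j_m, the value y^m_{i_m} satisfies the robust AND constraint with inputs (y^{m−1}_{i_m}, y^{m−1}_{j_m}), and the value y^m_{j_m} satisfies the robust OR constraint with the same inputs. Let f : {0, 1, ⊥} → ℝ map 0 ↦ 0, ⊥ ↦ 1/2, 1 ↦ 1, and let z⁰ = f ∘ y⁰, z¹, …, z^M be the ideal execution of the network on z⁰, i.e., at step m the pair (z_{i_m}, z_{j_m}) is replaced by (min(z_{i_m}, z_{j_m}), max(z_{i_m}, z_{j_m})). Then for every m ∈ {0, …, M} and every wire i: if z^m_i = 0 then y^m_i = 0, and if z^m_i = 1 then y^m_i = 1. In particular, if the final ideal vector z^M is nondecreasing, and K₀ (resp. K₁) denotes the number of wires i with y⁰_i = 0 (resp. y⁰_i = 1), then y^M_i = 0 for the first K₀ wires and y^M_i = 1 for the last K₁ wires. -/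

import Mathlib

/-- Values of Pure-Circuit nodes: 0, 1, or the garbage value ⊥. -/
inductive PCVal : Type
  | zero
  | one
  | bot
deriving DecidableEq

/-- The robust AND constraint on inputs `a, b` and output `c`. -/
def andOk (a b c : PCVal) : Prop :=
  (a = .one ∧ b = .one → c = .one) ∧ ((a = .zero ∨ b = .zero) → c = .zero)

/-- The robust OR constraint on inputs `a, b` and output `c`. -/
def orOk (a b c : PCVal) : Prop :=
  (a = .zero ∧ b = .zero → c = .zero) ∧ ((a = .one ∨ b = .one) → c = .one)

/-- The map `0 ↦ 0, ⊥ ↦ 1/2, 1 ↦ 1`. -/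
noncomputable def fval : PCVal → ℝ
  | .zero => 0
  | .bot => 1 / 2
  | .one => 1

/-!
The ideal execution `z` tracks the robust one `y`: every `z m i` lies in `[0, 1]`, and wherever it
is pure (0 or 1) the robust value is the same bit. A minimum of two values in `[0, 1]` is 0 only if
one of them is 0, and 1 only if both are 1, which is exactly what the robust AND gate guarantees;
dually for maximum and OR. For the second claim, every comparator permutes the ideal values, so the
last ideal vector has as many 0s and 1s as `fval ∘ y⁰`; once it is monotone they occupy its first
and last positions.
-/

open Finset

structure Tracks (v : PCVal) (x : ℝ) : Prop where
  nonneg : 0 ≤ x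
  le_one : x ≤ 1
  eq_zero : x = 0 → v = .zero
  eq_one : x = 1 → v = .one

theorem tracks_fval (v : PCVal) : Tracks v (fval v) := by
  cases v <;> constructor <;> norm_num [fval]

theorem fval_eq_zero_iff {v : PCVal} : fval v = 0 ↔ v = .zero := by
  cases v <;> simp [fval]

theorem fval_eq_one_iff {v : PCVal} : fval v = 1 ↔ v = .one := by
  cases v <;> simp [fval]

theorem Tracks.min {a b c : PCVal} {x x' : ℝ} (hand : andOk a b c) (ha : Tracks a x)
    (hb : Tracks b x') : Tracks c (min x x') where
  nonneg := le_min ha.nonneg hb.nonneg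
  le_one := (min_le_left x x').trans ha.le_one
  eq_zero h := hand.2 <| by
    rcases min_choice x x' with e | e <;> rw [e] at h
    exacts [.inl (ha.eq_zero h), .inr (hb.eq_zero h)]
  eq_one h := hand.1 ⟨ha.eq_one (le_antisymm ha.le_one (h ▸ min_le_left x x')),
    hb.eq_one (le_antisymm hb.le_one (h ▸ min_le_right x x'))⟩

theorem Tracks.max {a b c : PCVal} {x x' : ℝ} (hor : orOk a b c) (ha : Tracks a x)
    (hb : Tracks b x') : Tracks c (max x x') where
  nonneg := ha.nonneg.trans (le_max_left x x')
  le_one := max_le ha.le_one hb.le_one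
  eq_zero h := hor.1 ⟨ha.eq_zero (le_antisymm (h ▸ le_max_left x x') ha.nonneg),
    hb.eq_zero (le_antisymm (h ▸ le_max_right x x') hb.nonneg)⟩
  eq_one h := hor.2 <| by
    rcases max_choice x x' with e | e <;> rw [e] at h
    exacts [.inl (ha.eq_one h), .inr (hb.eq_one h)]

theorem exists_perm_of_comparator {ι α : Type*} [DecidableEq ι] [LinearOrder α] {u v : ι → α}
    {p q : ι} (hframe : ∀ i, i ≠ p → i ≠ q → v i = u i) (hmin : v p = min (u p) (u q))
    (hmax : v q = max (u p) (u q)) : ∃ σ : Equiv.Perm ι, v = u ∘ σ := by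
  rcases le_total (u p) (u q) with h | h
  · refine ⟨1, funext fun i => ?_⟩
    by_cases hp : i = p
    · subst hp; simpa [h] using hmin
    by_cases hq : i = q
    · subst hq; simpa [h] using hmax
    exact hframe i hp hq
  · refine ⟨Equiv.swap p q, funext fun i => ?_⟩
    by_cases hp : i = p
    · subst hp; simpa [h] using hmin
    by_cases hq : i = q
    · subst hq; simpa [h] using hmax
    simpa [Equiv.swap_apply_of_ne_of_ne hp hq] using hframe i hp hq

theorem eq_of_lt_card_filter_eq {α : Type*} [PartialOrder α] [DecidableEq α] {n : ℕ} {f : Fin n → α}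
    (hf : Monotone f) {a : α} (ha : ∀ j, a ≤ f j) {i : Fin n}
    (hi : (i : ℕ) < #{j | f j = a}) : f i = a := by
  by_contra hne
  have hsub : ({j | f j = a} : Finset (Fin n)) ⊆ Iio i := fun j hj => by
    simp only [mem_filter, mem_univ, true_and] at hj
    exact mem_Iio.2 <| lt_of_not_ge fun hij => hne <| le_antisymm (hj ▸ hf hij) (ha i)
  have := card_le_card hsub
  rw [Fin.card_Iio] at this
  omega

theorem eq_of_card_filter_eq_le {α : Type*} [PartialOrder α] [DecidableEq α] {n : ℕ} {f : Fin n → α}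
    (hf : Monotone f) {b : α} (hb : ∀ j, f j ≤ b) {i : Fin n}
    (hi : n - #{j | f j = b} ≤ (i : ℕ)) : f i = b := by
  by_contra hne
  have hsub : ({j | f j = b} : Finset (Fin n)) ⊆ Ioi i := fun j hj => by
    simp only [mem_filter, mem_univ, true_and] at hj
    exact mem_Ioi.2 <| lt_of_not_ge fun hji => hne <| le_antisymm (hb i) (hj ▸ hf hji)
  have := card_le_card hsub
  rw [Fin.card_Ioi] at this
  omega

section Execution

variable {K M : ℕ} {net : Fin M → Fin K × Fin K}

theorem tracks_execution {y : Fin (M + 1) → Fin K → PCVal} {z : Fin (M + 1) → Fin K → ℝ}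
    (hyframe : ∀ (m : Fin M) (i : Fin K), i ≠ (net m).1 → i ≠ (net m).2 →
      y m.succ i = y m.castSucc i)
    (hyand : ∀ m : Fin M,
      andOk (y m.castSucc (net m).1) (y m.castSucc (net m).2) (y m.succ (net m).1))
    (hyor : ∀ m : Fin M,
      orOk (y m.castSucc (net m).1) (y m.castSucc (net m).2) (y m.succ (net m).2))
    (hz0 : ∀ i, z 0 i = fval (y 0 i))
    (hzframe : ∀ (m : Fin M) (i : Fin K), i ≠ (net m).1 → i ≠ (net m).2 →
      z m.succ i = z m.castSucc i)
    (hzmin : ∀ m : Fin M,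
      z m.succ (net m).1 = min (z m.castSucc (net m).1) (z m.castSucc (net m).2))
    (hzmax : ∀ m : Fin M,
      z m.succ (net m).2 = max (z m.castSucc (net m).1) (z m.castSucc (net m).2))
    (m : Fin (M + 1)) (i : Fin K) : Tracks (y m i) (z m i) := by
  induction m using Fin.induction generalizing i with
  | zero => exact hz0 i ▸ tracks_fval (y 0 i)
  | succ m ih =>
    by_cases hp : i = (net m).1
    · exact hp ▸ hzmin m ▸ (ih _).min (hyand m) (ih _)
    by_cases hq : i = (net m).2
    · exact hq ▸ hzmax m ▸ (ih _).max (hyor m) (ih _)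
    exact hyframe m i hp hq ▸ hzframe m i hp hq ▸ ih i

theorem card_filter_execution_eq {α : Type*} [LinearOrder α] {z : Fin (M + 1) → Fin K → α}
    (hzframe : ∀ (m : Fin M) (i : Fin K), i ≠ (net m).1 → i ≠ (net m).2 →
      z m.succ i = z m.castSucc i)
    (hzmin : ∀ m : Fin M,
      z m.succ (net m).1 = min (z m.castSucc (net m).1) (z m.castSucc (net m).2))
    (hzmax : ∀ m : Fin M,
      z m.succ (net m).2 = max (z m.castSucc (net m).1) (z m.castSucc (net m).2))
    (m : Fin (M + 1)) (c : α) : #{i | z m i = c} = #{i | z 0 i = c} := by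
  obtain ⟨σ, hσ⟩ : ∃ σ : Equiv.Perm (Fin K), z m = z 0 ∘ σ := by
    induction m using Fin.induction with
    | zero => exact ⟨1, rfl⟩
    | succ m ih =>
      obtain ⟨σ, hσ⟩ := ih
      obtain ⟨τ, hτ⟩ := exists_perm_of_comparator (hzframe m) (hzmin m) (hzmax m)
      exact ⟨σ * τ, by rw [hτ, hσ]; rfl⟩
  exact card_equiv σ (by simp [hσ])

end Execution

theorem sorting_network_weak_sort_general {K M : ℕ}
    (net : Fin M → Fin K × Fin K)
    (y : Fin (M + 1) → Fin K → PCVal)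
    (hyframe : ∀ (m : Fin M) (i : Fin K), i ≠ (net m).1 → i ≠ (net m).2 →
      y m.succ i = y m.castSucc i)
    (hyand : ∀ m : Fin M,
      andOk (y m.castSucc (net m).1) (y m.castSucc (net m).2) (y m.succ (net m).1))
    (hyor : ∀ m : Fin M,
      orOk (y m.castSucc (net m).1) (y m.castSucc (net m).2) (y m.succ (net m).2))
    (z : Fin (M + 1) → Fin K → ℝ)
    (hz0 : ∀ i, z 0 i = fval (y 0 i))
    (hzframe : ∀ (m : Fin M) (i : Fin K), i ≠ (net m).1 → i ≠ (net m).2 →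
      z m.succ i = z m.castSucc i)
    (hzmin : ∀ m : Fin M,
      z m.succ (net m).1 = min (z m.castSucc (net m).1) (z m.castSucc (net m).2))
    (hzmax : ∀ m : Fin M,
      z m.succ (net m).2 = max (z m.castSucc (net m).1) (z m.castSucc (net m).2)) :
    (∀ (m : Fin (M + 1)) (i : Fin K),
      (z m i = 0 → y m i = PCVal.zero) ∧ (z m i = 1 → y m i = PCVal.one)) ∧
    (Monotone (z (Fin.last M)) →
      ∀ i : Fin K,
        ((i : ℕ) < (Finset.univ.filter (fun j => y 0 j = PCVal.zero)).card →
          y (Fin.last M) i = PCVal.zero) ∧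
        (K - (Finset.univ.filter (fun j => y 0 j = PCVal.one)).card ≤ (i : ℕ) →
          y (Fin.last M) i = PCVal.one)) := by
  have htrack := tracks_execution hyframe hyand hyor hz0 hzframe hzmin hzmax
  have hcount := card_filter_execution_eq hzframe hzmin hzmax (Fin.last M)
  refine ⟨fun m i => ⟨(htrack m i).eq_zero, (htrack m i).eq_one⟩, fun hmono i => ⟨fun hi => ?_,
    fun hi => ?_⟩⟩
  · refine (htrack _ i).eq_zero (eq_of_lt_card_filter_eq hmono (fun j => (htrack _ j).nonneg) ?_)
    simpa only [hcount, hz0, fval_eq_zero_iff] using hi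
  · refine (htrack _ i).eq_one (eq_of_card_filter_eq_le hmono (fun j => (htrack _ j).le_one) ?_)
    simpa only [hcount, hz0, fval_eq_one_iff] using hi

/-- Weak sorting by a comparator network implemented with robust AND/OR gates:
the Pure-Circuit execution `y` agrees with the ideal execution `z` on all
pure values, and hence (if the ideal output is sorted) the first `K₀` outputs
are 0 and the last `K₁` outputs are 1. -/
theorem sorting_network_weak_sort {K M : ℕ}
    (net : Fin M → Fin K × Fin K)
    (hnet : ∀ m, (net m).1 ≠ (net m).2)
    (y : Fin (M + 1) → Fin K → PCVal)
    (hyframe : ∀ (m : Fin M) (i : Fin K), i ≠ (net m).1 → i ≠ (net m).2 →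
      y m.succ i = y m.castSucc i)
    (hyand : ∀ m : Fin M,
      andOk (y m.castSucc (net m).1) (y m.castSucc (net m).2) (y m.succ (net m).1))
    (hyor : ∀ m : Fin M,
      orOk (y m.castSucc (net m).1) (y m.castSucc (net m).2) (y m.succ (net m).2))
    (z : Fin (M + 1) → Fin K → ℝ)
    (hz0 : ∀ i, z 0 i = fval (y 0 i))
    (hzframe : ∀ (m : Fin M) (i : Fin K), i ≠ (net m).1 → i ≠ (net m).2 →
      z m.succ i = z m.castSucc i)
    (hzmin : ∀ m : Fin M,
      z m.succ (net m).1 = min (z m.castSucc (net m).1) (z m.castSucc (net m).2))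
    (hzmax : ∀ m : Fin M,
      z m.succ (net m).2 = max (z m.castSucc (net m).1) (z m.castSucc (net m).2)) :
    (∀ (m : Fin (M + 1)) (i : Fin K),
      (z m i = 0 → y m i = PCVal.zero) ∧ (z m i = 1 → y m i = PCVal.one)) ∧
    (Monotone (z (Fin.last M)) →
      ∀ i : Fin K,
        ((i : ℕ) < (Finset.univ.filter (fun j => y 0 j = PCVal.zero)).card →
          y (Fin.last M) i = PCVal.zero) ∧
        (K - (Finset.univ.filter (fun j => y 0 j = PCVal.one)).card ≤ (i : ℕ) →
          y (Fin.last M) i = PCVal.one)) :=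
  sorting_network_weak_sort_general net y hyframe hyand hyor z hz0 hzframe hzmin hzmax
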